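/- arXiv:math/0412063 — 6 statements merged into one kernel-verified Lean document; each statement's English description precedes it below -/
import Mathlib

section
/- Let m ≥ 3 be odd, ω = e^{2πi/m}, q = 2cos(π/(2m)). For f(x_1) = a x_1 with a ∈ Z/mZ, the sum S(f) = (1/2) Σ_{x_1 ∈ {-1,1}} x_1 ω^{a x_1} satisfies |S(f)| ≤ q/2, with equality if and only if a ≡ ±⌊(m+1)/4⌋ mod m. -/
/-- The one-variable normalized sum `S(f) = (1/2) Σ_{x ∈ {-1,1}} x ω^{a x}`. -/
noncomputable def oneVarSum (m : ℕ) (a : ZMod m) : ℂ :=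
  (1 / 2) * ∑ x : Bool,
    ((if x then (1 : ℤ) else -1 : ℤ) : ℂ) *
      Complex.exp (2 * (Real.pi : ℂ) * Complex.I / m) ^ ((a.val : ℤ) * (if x then 1 else -1))

/-!
Since `S(f) = (ω^a - ω^{-a})/2 = i sin(2πa/m)`, we have `|S(f)|² = (1 - cos(2πn/m))/2`, where
`n ≤ (m - 1)/2` is the distance of `2a` from `0` modulo `m`. As `cos` decreases on `[0, π]`, this
is at most `(1 - cos(π(m - 1)/m))/2 = (1 + cos(π/m))/2 = cos²(π/(2m))`, with equality exactly when
`2a ≡ ±(m - 1)/2`, i.e. `a ≡ ±⌊(m + 1)/4⌋` because `2⌊(m + 1)/4⌋ ≡ ±(m - 1)/2 (mod m)`.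
-/

open Real

lemma oneVarSum_eq (m : ℕ) (a : ZMod m) :
    oneVarSum m a = Complex.I * sin (2 * π * a.val / m) := by
  set θ : ℝ := 2 * π * a.val / m
  have hpow (s : ℤ) : Complex.exp (2 * π * Complex.I / m) ^ ((a.val : ℤ) * s) =
      Complex.exp (s * θ * Complex.I) := by
    rw [← Complex.exp_int_mul]; push_cast [θ]; ring_nf
  simp only [oneVarSum, Fintype.sum_bool, if_true, Bool.false_eq_true, if_false, hpow,
    Int.cast_one, Int.cast_neg, one_mul, neg_one_mul, Complex.ofReal_sin, Complex.sin]
  linear_combination (Complex.exp (θ * Complex.I) - Complex.exp (-θ * Complex.I)) / 2 *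
    Complex.I_sq

lemma norm_oneVarSum (m : ℕ) (a : ZMod m) :
    ‖oneVarSum m a‖ = |sin (2 * π * a.val / m)| := by
  rw [oneVarSum_eq, norm_mul, Complex.norm_I, Complex.norm_real, norm_eq_abs, one_mul]

lemma cos_two_pi_mul_div_congr {m : ℕ} {k l : ℤ} (h : (k : ZMod m) = l) :
    cos (2 * π * k / m) = cos (2 * π * l / m) := by
  rcases Nat.eq_zero_or_pos m with rfl | hm
  · simp
  obtain ⟨c, hc⟩ := (ZMod.intCast_eq_intCast_iff_dvd_sub _ _ _).mp h.symm
  have hc' : (k : ℝ) = l + m * c := by exact_mod_cast (by linarith : k = l + m * c)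
  rw [hc', show 2 * π * (l + m * c) / m = 2 * π * l / m + c * (2 * π) by field_simp,
    cos_add_int_mul_two_pi]

lemma cos_two_pi_mul_div_eq_natAbs_valMinAbs {m : ℕ} [NeZero m] {x : ZMod m} {k : ℤ}
    (hk : (k : ZMod m) = x) :
    cos (2 * π * k / m) = cos (2 * π * x.valMinAbs.natAbs / m) := by
  rw [cos_two_pi_mul_div_congr (hk.trans (ZMod.coe_valMinAbs x).symm), Nat.cast_natAbs,
    Int.cast_abs]
  rcases abs_choice (x.valMinAbs : ℝ) with h | h
  · rw [h]
  · rw [h, mul_neg, neg_div, cos_neg]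

lemma sin_sq_two_pi_val_div {m : ℕ} [NeZero m] (a : ZMod m) :
    sin (2 * π * a.val / m) ^ 2 = (1 - cos (2 * π * (2 * a).valMinAbs.natAbs / m)) / 2 := by
  rw [sin_sq_eq_half_sub, ← cos_two_pi_mul_div_eq_natAbs_valMinAbs (k := 2 * a.val)
    (by push_cast; simp)]
  push_cast
  ring_nf

lemma cos_sq_pi_div_two_mul {m : ℕ} (hm : Odd m) :
    cos (π / (2 * m)) ^ 2 = (1 - cos (2 * π * (m / 2 : ℕ) / m)) / 2 := by
  have hm0 : (m : ℝ) ≠ 0 := by exact_mod_cast hm.pos.ne'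
  have hhalf : ((m / 2 : ℕ) : ℝ) = (m - 1) / 2 := by
    obtain ⟨k, rfl⟩ := hm
    rw [show (2 * k + 1) / 2 = k by omega]
    push_cast; ring
  rw [cos_sq, hhalf, show 2 * π * ((m - 1) / 2) / m = π - π / m by field_simp,
    cos_pi_sub, show 2 * (π / (2 * m)) = π / m by field_simp]
  ring

lemma two_pi_mul_div_mem_Icc {m n : ℕ} (hn : 2 * n ≤ m) :
    2 * π * n / m ∈ Set.Icc 0 π := by
  rcases Nat.eq_zero_or_pos m with rfl | hm
  · simp [pi_nonneg]
  have hm' : (0 : ℝ) < m := by exact_mod_cast hm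
  have hn' : 2 * (n : ℝ) ≤ m := by exact_mod_cast hn
  refine ⟨by positivity, ?_⟩
  rw [div_le_iff₀ hm']
  nlinarith [pi_pos]

lemma cos_two_pi_mul_div_le_iff {m n N : ℕ} (hn : 2 * n ≤ m) (hN : 2 * N ≤ m) :
    cos (2 * π * N / m) ≤ cos (2 * π * n / m) ↔ n ≤ N := by
  rcases Nat.eq_zero_or_pos m with rfl | hm
  · obtain rfl : n = 0 := by omega
    obtain rfl : N = 0 := by omega
    simp
  have hm' : (0 : ℝ) < m := by exact_mod_cast hm
  rw [strictAntiOn_cos.le_iff_ge (two_pi_mul_div_mem_Icc hN) (two_pi_mul_div_mem_Icc hn),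
    div_le_div_iff_of_pos_right hm', mul_le_mul_iff_right₀ two_pi_pos, Nat.cast_le]

lemma natAbs_valMinAbs_eq_div_two_iff {m : ℕ} [NeZero m] (hm : Odd m) (x : ZMod m) :
    x.valMinAbs.natAbs = m / 2 ↔ x = ((m / 2 : ℕ) : ZMod m) ∨ x = -((m / 2 : ℕ) : ZMod m) := by
  have hm2 := Nat.odd_iff.mp hm
  have hpos : ((m / 2 : ℕ) : ℤ) * 2 ∈ Set.Ioc (-(m : ℤ)) m := by
    simp only [Set.mem_Ioc]; omega
  have hneg : -((m / 2 : ℕ) : ℤ) * 2 ∈ Set.Ioc (-(m : ℤ)) m := by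
    simp only [Set.mem_Ioc]; omega
  rw [Int.natAbs_eq_iff, ZMod.valMinAbs_spec, ZMod.valMinAbs_spec, Int.cast_neg, Int.cast_natCast]
  simp only [hpos, hneg, and_true]

lemma two_mul_add_one_div_four_eq {m : ℕ} (hm : Odd m) :
    (2 * ((m + 1) / 4 : ℕ) : ZMod m) = ((m / 2 : ℕ) : ZMod m) ∨
      (2 * ((m + 1) / 4 : ℕ) : ZMod m) = -((m / 2 : ℕ) : ZMod m) := by
  rcases Nat.odd_mod_four_iff.mp (Nat.odd_iff.mp hm) with h | h
  · left
    exact_mod_cast congrArg (Nat.cast : ℕ → ZMod m) (by omega : 2 * ((m + 1) / 4) = m / 2)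
  · right
    rw [eq_neg_iff_add_eq_zero, ← ZMod.natCast_self m]
    exact_mod_cast congrArg (Nat.cast : ℕ → ZMod m) (by omega : 2 * ((m + 1) / 4) + m / 2 = m)

lemma mul_eq_or_eq_neg_iff {R : Type*} [Ring R] {u k h a : R} (hu : IsUnit u)
    (hk : u * k = h ∨ u * k = -h) : u * a = h ∨ u * a = -h ↔ a = k ∨ a = -k := by
  obtain rfl | rfl : h = u * k ∨ h = -(u * k) := hk.imp Eq.symm (fun h' => by rw [h', neg_neg])
  all_goals simp only [← mul_neg, neg_neg, hu.mul_right_inj]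
  all_goals tauto

theorem stmt_7_general (m : ℕ) (hodd : Odd m) (a : ZMod m) :
    ‖oneVarSum m a‖ ≤ 2 * Real.cos (Real.pi / (2 * m)) / 2 ∧
      (‖oneVarSum m a‖ = 2 * Real.cos (Real.pi / (2 * m)) / 2 ↔
        a = (((m + 1) / 4 : ℕ) : ZMod m) ∨ a = -(((m + 1) / 4 : ℕ) : ZMod m)) := by
  have : NeZero m := ⟨hodd.pos.ne'⟩
  have hcos : 0 ≤ cos (π / (2 * m)) := by
    have hm : (1 : ℝ) ≤ m := by exact_mod_cast hodd.pos
    refine cos_nonneg_of_mem_Icc ⟨?_, div_le_div_of_nonneg_left pi_pos.le two_pos (by linarith)⟩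
    linarith [pi_pos, (by positivity : 0 ≤ π / (2 * m))]
  have hunit : IsUnit (2 : ZMod m) := by
    exact_mod_cast (ZMod.isUnit_iff_coprime 2 m).mpr (Nat.coprime_two_left.mpr hodd)
  have hn := ZMod.natAbs_valMinAbs_le (2 * a)
  have hn' : 2 * (2 * a).valMinAbs.natAbs ≤ m := by omega
  have hN : 2 * (m / 2) ≤ m := Nat.mul_div_le m 2
  have hle := (cos_two_pi_mul_div_le_iff hn' hN).mpr hn
  rw [norm_oneVarSum, mul_div_cancel_left₀ _ two_ne_zero, ← abs_of_nonneg hcos, ← sq_le_sq,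
    ← sq_eq_sq_iff_abs_eq_abs, sin_sq_two_pi_val_div, cos_sq_pi_div_two_mul hodd]
  refine ⟨by linarith, ?_⟩
  rw [div_left_inj' two_ne_zero, sub_right_inj, eq_comm, ← hle.ge_iff_eq,
    cos_two_pi_mul_div_le_iff hN hn', hn.ge_iff_eq, natAbs_valMinAbs_eq_div_two_iff hodd,
    mul_eq_or_eq_neg_iff hunit (two_mul_add_one_div_four_eq hodd)]

theorem stmt_7 (m : ℕ) [NeZero m] (hm : 3 ≤ m) (hodd : Odd m) (a : ZMod m) :
    ‖oneVarSum m a‖ ≤ 2 * Real.cos (Real.pi / (2 * m)) / 2 ∧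
      (‖oneVarSum m a‖ = 2 * Real.cos (Real.pi / (2 * m)) / 2 ↔
        a = (((m + 1) / 4 : ℕ) : ZMod m) ∨ a = -(((m + 1) / 4 : ℕ) : ZMod m)) :=
  stmt_7_general m hodd a
end

section
/- Let m ≥ 3 be odd, q = 2cos(π/(2m)), c = ⌊(m+1)/4⌋. If a ∈ Z/mZ with a ≢ ±c mod m, then |ω^a - ω^{-a}| ≤ 2cos(3π/(2m)), and moreover 2cos(3π/(2m)) ≤ q^9/2^8. -/
/-!
With `ζ = exp (2πi/m)` one has `ζ^v - ζ^(-v) = 2i sin (2πv/m)`, and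
`|sin (2πv/m)| = |cos (πn/(2m))|` for every `n ≡ m - 4v (mod 2m)`. Since `m` is odd, so is `n`,
and a representative with `|n| ≤ m` equals `±1` exactly when `v ≡ ±⌊(m+1)/4⌋`; otherwise
`3 ≤ |n| ≤ 2m - 3`, and monotonicity of `cos` on `[0, π]` bounds `|cos (πn/(2m))|` by
`cos (3π/(2m))`. The second inequality is `4x³ - 3x ≤ x⁹` for `x = cos (π/(2m)) ≥ 0`, because
`x⁹ - 4x³ + 3x = x (x² - 1)² (x⁴ + 2x² + 3)`.
-/

open Real

theorem norm_exp_mul_I_zpow_sub_zpow_neg (x : ℝ) (n : ℤ) :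
    ‖Complex.exp (x * Complex.I) ^ n - Complex.exp (x * Complex.I) ^ (-n)‖ =
      2 * |sin (n * x)| := by
  have hexp (k : ℤ) :
      Complex.exp (x * Complex.I) ^ k = Complex.exp (((k * x : ℝ) : ℂ) * Complex.I) := by
    rw [← Complex.exp_int_mul]; push_cast; ring_nf
  rw [hexp, hexp, Complex.exp_mul_I, Complex.exp_mul_I, Int.cast_neg, neg_mul, Complex.ofReal_neg,
    Complex.cos_neg, Complex.sin_neg, ← Complex.ofReal_sin,
    show ∀ c s : ℂ, c + s * Complex.I - (c + -s * Complex.I) = (2 * s) * Complex.I by intros; ring,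
    norm_mul, Complex.norm_I, mul_one, norm_mul, Complex.norm_real, Real.norm_eq_abs]
  norm_num

theorem abs_cos_pi_mul_div_le_cos {N d n : ℝ} (hN : 0 < N) (hd : 0 ≤ d) (h₁ : d ≤ |n|)
    (h₂ : |n| ≤ N - d) : |cos (π * n / N)| ≤ cos (π * d / N) := by
  have hmono {t : ℝ} (ht₁ : d ≤ t) (ht₂ : t ≤ N) : cos (π * t / N) ≤ cos (π * d / N) := by
    apply cos_le_cos_of_nonneg_of_le_pi (by positivity)
    · rw [div_le_iff₀ hN]; nlinarith [pi_pos]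
    · gcongr
  rw [← cos_abs, abs_div, abs_mul, abs_of_pos pi_pos, abs_of_pos hN, abs_le]
  constructor
  · rw [neg_le, ← cos_pi_sub, show π - π * |n| / N = π * (N - |n|) / N by field_simp]
    exact hmono (by linarith) (by linarith [abs_nonneg n])
  · exact hmono h₁ (by linarith)

theorem two_mul_cos_three_mul_le {θ : ℝ} (h : 0 ≤ cos θ) :
    2 * cos (3 * θ) ≤ (2 * cos θ) ^ 9 / 2 ^ 8 := by
  have hfactor : 0 ≤ cos θ * (cos θ ^ 2 - 1) ^ 2 * (cos θ ^ 4 + 2 * cos θ ^ 2 + 3) := by positivity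
  rw [cos_three_mul]
  nlinarith [hfactor]

theorem exists_abs_sub_four_mul_add_mem {m v : ℕ} (hodd : Odd m) (hv : v < m)
    (h₁ : v ≠ (m + 1) / 4) (h₂ : v ≠ m - (m + 1) / 4) :
    ∃ l : ℤ, 3 ≤ |(m : ℤ) - 4 * v + 2 * m * l| ∧ |(m : ℤ) - 4 * v + 2 * m * l| ≤ 2 * m - 3 := by
  obtain ⟨k, rfl⟩ := hodd
  rcases Nat.lt_or_ge (2 * v) (2 * k + 1) with h | h
  · refine ⟨0, ?_, ?_⟩ <;> [rw [le_abs]; rw [abs_le]] <;> omega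
  · refine ⟨1, ?_, ?_⟩ <;> [rw [le_abs]; rw [abs_le]] <;> omega

theorem stmt_8_general (m : ℕ) [NeZero m] (hodd : Odd m) (a : ZMod m)
    (ha : a ≠ (((m + 1) / 4 : ℕ) : ZMod m) ∧ a ≠ -(((m + 1) / 4 : ℕ) : ZMod m)) :
    ‖Complex.exp (2 * (Real.pi : ℂ) * Complex.I / m) ^ (a.val : ℤ) -
        Complex.exp (2 * (Real.pi : ℂ) * Complex.I / m) ^ (-(a.val : ℤ))‖ ≤
      2 * Real.cos (3 * Real.pi / (2 * m)) ∧
    2 * Real.cos (3 * Real.pi / (2 * m)) ≤ (2 * Real.cos (Real.pi / (2 * m))) ^ 9 / 2 ^ 8 := by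
  have hm : (0 : ℝ) < m := Nat.cast_pos.mpr (NeZero.pos m)
  refine ⟨?_, ?_⟩
  · have h₁ : a.val ≠ (m + 1) / 4 := fun h => ha.1 (by rw [← h, ZMod.natCast_zmod_val])
    have h₂ : a.val ≠ m - (m + 1) / 4 := fun h => ha.2 <| by
      rw [← ZMod.natCast_zmod_val a, h, Nat.cast_sub (by omega), ZMod.natCast_self, zero_sub]
    obtain ⟨l, hl₁, hl₂⟩ := exists_abs_sub_four_mul_add_mem hodd a.val_lt h₁ h₂
    have hsin : |sin (a.val * (2 * π / m))| =
        |cos (π * ((m : ℤ) - 4 * a.val + 2 * m * l : ℤ) / (2 * m))| := by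
      rw [show π * ((m : ℤ) - 4 * a.val + 2 * m * l : ℤ) / (2 * m) =
          π / 2 - a.val * (2 * π / m) + l * π by push_cast; field_simp; ring,
        cos_add_int_mul_pi, abs_mul, abs_neg_one_zpow, one_mul, cos_pi_div_two_sub]
    rw [show 2 * (π : ℂ) * Complex.I / m = ((2 * π / m : ℝ) : ℂ) * Complex.I by push_cast; ring,
      norm_exp_mul_I_zpow_sub_zpow_neg, Int.cast_natCast, hsin,
      show 3 * π / (2 * m) = π * 3 / (2 * m) by ring]
    gcongr
    exact abs_cos_pi_mul_div_le_cos (by positivity) (by norm_num) (by exact_mod_cast hl₁)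
      (by exact_mod_cast hl₂)
  · rw [show 3 * π / (2 * m) = 3 * (π / (2 * m)) by ring]
    refine two_mul_cos_three_mul_le (cos_nonneg_of_neg_pi_div_two_le_of_le ?_ ?_)
    · linarith [show 0 ≤ π / (2 * m) by positivity, pi_pos]
    · gcongr; linarith [show (1 : ℝ) ≤ m by exact_mod_cast NeZero.one_le]

theorem stmt_8 (m : ℕ) [NeZero m] (hm : 3 ≤ m) (hodd : Odd m) (a : ZMod m)
    (ha : a ≠ (((m + 1) / 4 : ℕ) : ZMod m) ∧ a ≠ -(((m + 1) / 4 : ℕ) : ZMod m)) :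
    ‖Complex.exp (2 * (Real.pi : ℂ) * Complex.I / m) ^ (a.val : ℤ) -
        Complex.exp (2 * (Real.pi : ℂ) * Complex.I / m) ^ (-(a.val : ℤ))‖ ≤
      2 * Real.cos (3 * Real.pi / (2 * m)) ∧
    2 * Real.cos (3 * Real.pi / (2 * m)) ≤ (2 * Real.cos (Real.pi / (2 * m))) ^ 9 / 2 ^ 8 :=
  stmt_8_general m hodd a ha
end

section
/- For all x in the interval [√3, 2), x^9 - 256 x^3 + 768 x ≥ 0. -/
theorem stmt_10 (x : ℝ) (h1 : Real.sqrt 3 ≤ x) (h2 : x < 2) :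
    0 ≤ x ^ 9 - 256 * x ^ 3 + 768 * x := by
  have hs : (0:ℝ) ≤ Real.sqrt 3 := Real.sqrt_nonneg 3
  have hx0 : 0 ≤ x := le_trans hs h1
  have hx2 : 3 ≤ x ^ 2 := by
    have := Real.sq_sqrt (by norm_num : (3:ℝ) ≥ 0)
    nlinarith [Real.sqrt_nonneg 3]
  have h4 : x ^ 2 ≤ 4 := by nlinarith
  nlinarith [mul_nonneg (mul_nonneg hx0 (sub_nonneg.mpr h4)) (by nlinarith : (0:ℝ) ≤ 192 - 16 * x^2 - 4 * (x^2)^2 - (x^2)^3), sq_nonneg x]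
end

section
/- For all x in the interval [√3, 2), x^5/8 ≥ √(2x^6 - 11x^4 + 16x^2), equivalently x^{10}/64 ≥ 2x^6 - 11x^4 + 16x^2. -/
theorem stmt_11 (x : ℝ) (h1 : Real.sqrt 3 ≤ x) (h2 : x < 2) :
    Real.sqrt (2 * x ^ 6 - 11 * x ^ 4 + 16 * x ^ 2) ≤ x ^ 5 / 8 ∧
      2 * x ^ 6 - 11 * x ^ 4 + 16 * x ^ 2 ≤ x ^ 10 / 64 := by
  have hx0 : (0:ℝ) ≤ x := le_trans (Real.sqrt_nonneg 3) h1
  have h3 : (3:ℝ) ≤ x ^ 2 := by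
    calc (3:ℝ) = Real.sqrt 3 ^ 2 := (Real.sq_sqrt (by norm_num)).symm
      _ ≤ x ^ 2 := pow_le_pow_left₀ (Real.sqrt_nonneg 3) h1 2
  have h4 : x ^ 2 < 4 := by nlinarith
  have key : 2 * x ^ 6 - 11 * x ^ 4 + 16 * x ^ 2 ≤ x ^ 10 / 64 := by
    nlinarith [sq_nonneg (x^2 - 3), sq_nonneg (x^2 - 4), sq_nonneg x,
      mul_nonneg (mul_nonneg (sq_nonneg x) (sq_nonneg x)) (sq_nonneg x),
      mul_pos (sub_pos.mpr h4) (sub_pos.mpr h4)]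
  refine ⟨?_, key⟩
  have h5 : x ^ 5 / 8 ≥ 0 := by positivity
  rw [show x ^ 5 / 8 = Real.sqrt ((x ^ 5 / 8) ^ 2) from (Real.sqrt_sq h5).symm]
  apply Real.sqrt_le_sqrt
  nlinarith [key]
end

section
/- Let m ≥ 3 be odd, ω = e^{2πi/m}, s = 2cos(π/m). Then |2ω^{2c} + s ω^{-2c}|^2 = 2q^6 - 11q^4 + 16q^2, where c = ⌊(m+1)/4⌋ and q = 2cos(π/(2m)). -/
/-!
With `z = ω ^ (2c)` on the unit circle, `|2z + s z⁻¹|² = 4 + s² + 4s · Re (z²)`. As `m` is odd,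
`4c = m ± 1`, so `z² = ω ^ (±1)` and `Re (z²) = cos (2π/m)`. The Chebyshev relation
`2 cos 2x = (2 cos x)² - 2` gives `2 cos (2π/m) = s² - 2` and `s = q² - 2`, so the square equals
`2s³ + s² - 4s + 4`, which is the stated polynomial in `q`.
-/

open Complex

theorem Complex.sq_norm_mul_add_mul_inv {z : ℂ} (hz : ‖z‖ = 1) (a b : ℝ) :
    ‖(a : ℂ) * z + b * z⁻¹‖ ^ 2 = a ^ 2 + b ^ 2 + 2 * a * b * (z ^ 2).re := by
  have hnormSq : z.re * z.re + z.im * z.im = 1 := by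
    rw [← normSq_apply, ← Complex.sq_norm, hz, one_pow]
  rw [inv_eq_conj hz, Complex.sq_norm, normSq_apply]
  simp only [add_re, add_im, mul_re, mul_im, ofReal_re, ofReal_im, conj_re, conj_im, pow_two]
  linear_combination (a ^ 2 + b ^ 2) * hnormSq

theorem Complex.re_zpow_eq_re_of_pow_eq_one {ω : ℂ} {m : ℕ} (hω : ω ^ m = 1) (hnorm : ‖ω‖ = 1)
    {k : ℤ} (hk : k = m + 1 ∨ k = m - 1) : (ω ^ k).re = ω.re := by
  have hω₀ : ω ≠ 0 := norm_ne_zero_iff.mp (by rw [hnorm]; exact one_ne_zero)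
  rcases hk with rfl | rfl
  · rw [zpow_add₀ hω₀, zpow_natCast, hω, one_mul, zpow_one]
  · rw [zpow_sub₀ hω₀, zpow_natCast, hω, zpow_one, one_div, inv_eq_conj hnorm, conj_re]

theorem Real.two_mul_cos_two_mul (x : ℝ) : 2 * Real.cos (2 * x) = (2 * Real.cos x) ^ 2 - 2 := by
  rw [Real.cos_two_mul]; ring

theorem Complex.exp_two_pi_mul_I_div_natCast (m : ℕ) :
    exp (2 * Real.pi * I / m) = exp ((2 * Real.pi / m : ℝ) * I) := by
  push_cast; ring_nf

theorem stmt_12_general (m : ℕ) (hodd : Odd m) :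
    (‖(2 * Complex.exp (2 * (Real.pi : ℂ) * Complex.I / m) ^ ((2 * ((m + 1) / 4) : ℕ) : ℤ) +
        (2 * Real.cos (Real.pi / m) : ℂ) *
          Complex.exp (2 * (Real.pi : ℂ) * Complex.I / m) ^ (-((2 * ((m + 1) / 4) : ℕ) : ℤ)))‖) ^ 2 =
      2 * (2 * Real.cos (Real.pi / (2 * m))) ^ 6 - 11 * (2 * Real.cos (Real.pi / (2 * m))) ^ 4 +
        16 * (2 * Real.cos (Real.pi / (2 * m))) ^ 2 := by
  set ω := exp (2 * Real.pi * I / m) with hω_def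
  set k : ℤ := ((2 * ((m + 1) / 4) : ℕ) : ℤ)
  have hω_norm : ‖ω‖ = 1 := by rw [hω_def, exp_two_pi_mul_I_div_natCast, norm_exp_ofReal_mul_I]
  have hω_re : ω.re = Real.cos (2 * Real.pi / m) := by
    rw [hω_def, exp_two_pi_mul_I_div_natCast, exp_ofReal_mul_I_re]
  have hω_pow : ω ^ m = 1 := (isPrimitiveRoot_exp m hodd.pos.ne').pow_eq_one
  have hk : k * 2 = m + 1 ∨ k * 2 = m - 1 := by
    obtain ⟨j, rfl⟩ := hodd
    omega
  have hsq : ((ω ^ k) ^ 2).re = Real.cos (2 * Real.pi / m) := by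
    rw [← zpow_natCast, ← zpow_mul, Nat.cast_ofNat,
      re_zpow_eq_re_of_pow_eq_one hω_pow hω_norm hk, hω_re]
  have hz_norm : ‖ω ^ k‖ = 1 := by rw [norm_zpow, hω_norm, one_zpow]
  have hnorm := sq_norm_mul_add_mul_inv hz_norm 2 (2 * Real.cos (Real.pi / m))
  simp only [ofReal_ofNat, ofReal_mul] at hnorm
  rw [zpow_neg, hnorm, hsq]
  set s := 2 * Real.cos (Real.pi / m)
  set q := 2 * Real.cos (Real.pi / (2 * m))
  have hs : 2 * Real.cos (2 * Real.pi / m) = s ^ 2 - 2 := by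
    rw [← Real.two_mul_cos_two_mul, mul_div_assoc]
  have hq : s = q ^ 2 - 2 := by
    rw [← Real.two_mul_cos_two_mul, mul_div_assoc', mul_div_mul_left _ _ (two_ne_zero' ℝ)]
  calc _ = 4 + s ^ 2 + 2 * s * (2 * Real.cos (2 * Real.pi / m)) := by ring
    _ = 4 + s ^ 2 + 2 * s * (s ^ 2 - 2) := by rw [hs]
    _ = _ := by rw [hq]; ring

theorem stmt_12 (m : ℕ) (hm : 3 ≤ m) (hodd : Odd m) :
    (‖(2 * Complex.exp (2 * (Real.pi : ℂ) * Complex.I / m) ^ ((2 * ((m + 1) / 4) : ℕ) : ℤ) +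
        (2 * Real.cos (Real.pi / m) : ℂ) *
          Complex.exp (2 * (Real.pi : ℂ) * Complex.I / m) ^ (-((2 * ((m + 1) / 4) : ℕ) : ℤ)))‖) ^ 2 =
      2 * (2 * Real.cos (Real.pi / (2 * m))) ^ 6 - 11 * (2 * Real.cos (Real.pi / (2 * m))) ^ 4 +
        16 * (2 * Real.cos (Real.pi / (2 * m))) ^ 2 :=
  stmt_12_general m hodd
end

section
/- Let m ≥ 3 be odd, q = 2cos(π/(2m)), and let n be odd. For f(x) = c(ε_1 x_1 x_2 + ε_2 x_3 x_4 + ⋯ + ε_{(n-1)/2} x_{n-2} x_{n-1} + ε x_n) with c = ⌊(m+1)/4⌋ and ε_i, ε ∈ {-1,1}, the normalized sum S(f,n,m) = 2^{-n} Σ_{x∈{-1,1}^n} x_1⋯x_n e^{2πi f(x)/m} satisfies |S(f,n,m)| = (q/2)^{(n+1)/2}. -/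
/-!
Split `x ∈ {±1}^(2k+1)` into `k` pairs and one last coordinate. With `φ = 2πc/m`, both
`x₁ ⋯ x_n` and `e^{2πi f(x)/m} = ∏ⱼ e^{iφ εⱼ x_{2j-1} x_{2j}} · e^{iφ ε x_n}` factor along this
splitting, so the sum is a product of `k` sums over `{±1}²`, each equal to
`2 (e^{iφεⱼ} - e^{-iφεⱼ})`, and one sum over `{±1}`, equal to `e^{iφε} - e^{-iφε}`; as the signs
are `±1`, these have norms `4 |sin φ|` and `2 |sin φ|`. Since `4c = m ± 1`,
`φ = π/2 ± π/(2m)` and `|sin φ| = cos (π/(2m))`.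
-/

open Complex Finset
open scoped Real

theorem Fin.prod_univ_two_mul_add_one {M : Type*} [CommMonoid M] :
    ∀ (k : ℕ) (f : Fin (2 * k + 1) → M), ∏ j, f j =
      (∏ i : Fin k, f ⟨2 * i, by linarith [i.2]⟩ * f ⟨2 * i + 1, by linarith [i.2]⟩) *
        f ⟨2 * k, (2 * k).lt_succ_self⟩
  | 0, f => by simp
  | k + 1, f => by
    rw [Fin.prod_univ_castSucc]
    -- `Fin (2 * (k + 1))` is `Fin (2 * k + 1 + 1)` only up to unfolding `Nat.mul`
    erw [Fin.prod_univ_castSucc (n := 2 * k + 1)]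
    rw [Fin.prod_univ_two_mul_add_one k, Fin.prod_univ_castSucc]
    simp only [mul_assoc]
    rfl

section SplitPairs

variable {α : Type*} (k : ℕ)

def splitPairs (x : Fin (2 * k + 1) → α) : (Fin k → α × α) × α :=
  (fun i => (x ⟨2 * i, by linarith [i.2]⟩, x ⟨2 * i + 1, by linarith [i.2]⟩),
    x ⟨2 * k, (2 * k).lt_succ_self⟩)

theorem splitPairs_injective : Function.Injective (splitPairs (α := α) k) := by
  intro x y h
  simp only [splitPairs, Prod.mk.injEq, funext_iff] at h
  obtain ⟨hpairs, hlast⟩ := h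
  funext ⟨j, hj⟩
  obtain ⟨i, rfl | rfl⟩ := Nat.even_or_odd' j
  · rcases Nat.lt_or_ge i k with hik | hik
    · exact (hpairs ⟨i, hik⟩).1
    · obtain rfl : i = k := by omega
      exact hlast
  · exact (hpairs ⟨i, by omega⟩).2

theorem splitPairs_bijective [Fintype α] : Function.Bijective (splitPairs (α := α) k) := by
  classical
  refine (Fintype.bijective_iff_injective_and_card _).2 ⟨splitPairs_injective k, ?_⟩
  simp only [Fintype.card_fun, Fintype.card_prod, Fintype.card_fin]
  ring

theorem sum_prod_pairs_mul_eq {R : Type*} [CommSemiring R] [Fintype α]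
    (F : Fin k → α × α → R) (G : α → R) :
    ∑ x : Fin (2 * k + 1) → α,
        (∏ i : Fin k, F i (x ⟨2 * i, by linarith [i.2]⟩, x ⟨2 * i + 1, by linarith [i.2]⟩)) *
          G (x ⟨2 * k, (2 * k).lt_succ_self⟩)
      = (∏ i, ∑ q, F i q) * ∑ a, G a := by
  rw [Fintype.prod_sum, Finset.sum_mul_sum, ← Fintype.sum_prod_type']
  exact (splitPairs_bijective k).sum_comp fun p => (∏ i, F i (p.1 i)) * G p.2

end SplitPairs

theorem prod_mul_cexp_sum_add {k : ℕ} (θ : ℂ) (u : Fin (2 * k + 1) → ℂ) (A : Fin k → ℤ)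
    (a : ℤ) :
    (∏ j, u j) * cexp (θ * ↑(∑ i, A i + a))
      = (∏ i : Fin k,
            u ⟨2 * i, by linarith [i.2]⟩ * u ⟨2 * i + 1, by linarith [i.2]⟩ * cexp (θ * A i)) *
          (u ⟨2 * k, (2 * k).lt_succ_self⟩ * cexp (θ * a)) := by
  rw [Fin.prod_univ_two_mul_add_one, Int.cast_add, Int.cast_sum, mul_add, mul_sum, exp_add,
    exp_sum]
  simp only [prod_mul_distrib]
  ring

theorem sum_bool_sign_mul_cexp (θ : ℂ) (e : ℤ) :
    ∑ b : Bool, (if b then (1 : ℂ) else -1) * cexp (θ * ↑(e * if b then (1 : ℤ) else -1))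
      = cexp (θ * e) - cexp (-(θ * e)) := by
  simp only [Fintype.sum_bool, ↓reduceIte, Bool.false_eq_true]
  push_cast [mul_neg, mul_one]
  ring

theorem sum_bool_sign_mul_sign_mul_cexp (θ : ℂ) (e : ℤ) :
    ∑ q : Bool × Bool, (if q.1 then (1 : ℂ) else -1) * (if q.2 then (1 : ℂ) else -1) *
        cexp (θ * ↑(e * (if q.1 then (1 : ℤ) else -1) * (if q.2 then (1 : ℤ) else -1)))
      = 2 * (cexp (θ * e) - cexp (-(θ * e))) := by
  simp only [Fintype.sum_prod_type, Fintype.sum_bool, ↓reduceIte, Bool.false_eq_true]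
  push_cast [mul_neg, mul_one, neg_neg]
  ring

theorem norm_cexp_sub_cexp_neg (φ : ℝ) {e : ℤ} (he : e = 1 ∨ e = -1) :
    ‖cexp (φ * I * e) - cexp (-(φ * I * e))‖ = 2 * |Real.sin φ| := by
  have h : cexp (φ * I) - cexp (-(φ * I)) = 2 * I * Real.sin φ := by
    rw [ofReal_sin, sin]; ring_nf; rw [I_sq]; ring
  have hnorm : ‖cexp (φ * I) - cexp (-(φ * I))‖ = 2 * |Real.sin φ| := by
    rw [h, norm_mul, norm_mul, norm_I, norm_real, Real.norm_eq_abs, Complex.norm_two, mul_one]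
  rcases he with rfl | rfl
  · simpa using hnorm
  · rw [Int.cast_neg, Int.cast_one, mul_neg_one, neg_neg, norm_sub_rev, hnorm]

theorem abs_sin_two_pi_mul_div {m c : ℝ} (hm : 1 ≤ m) (hc : 4 * c = m + 1 ∨ 4 * c + 1 = m) :
    |Real.sin (2 * π * c / m)| = Real.cos (π / (2 * m)) := by
  have hcos : 0 ≤ Real.cos (π / (2 * m)) := by
    refine Real.cos_nonneg_of_neg_pi_div_two_le_of_le ?_ ?_
    · linarith [show 0 ≤ π / (2 * m) by positivity, Real.pi_pos]
    · exact div_le_div_of_nonneg_left Real.pi_pos.le two_pos (by linarith)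
  rcases hc with hc | hc
  · have hφ : 2 * π * c / m = π / (2 * m) + π / 2 := by
      field_simp
      linear_combination hc
    rw [hφ, Real.sin_add_pi_div_two, abs_of_nonneg hcos]
  · have hφ : 2 * π * c / m = π / 2 - π / (2 * m) := by
      field_simp
      linear_combination hc
    rw [hφ, Real.sin_pi_div_two_sub, abs_of_nonneg hcos]

theorem Nat.four_mul_add_one_div_four_of_odd {m : ℕ} (hm : Odd m) :
    4 * ((m + 1) / 4) = m + 1 ∨ 4 * ((m + 1) / 4) + 1 = m := by
  obtain ⟨j, rfl⟩ := hm
  omega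

theorem stmt_14 (m : ℕ) (hodd : Odd m) (k : ℕ)
    (ε : Fin k → ℤ) (hε : ∀ i, ε i = 1 ∨ ε i = -1) (ε₀ : ℤ) (hε₀ : ε₀ = 1 ∨ ε₀ = -1) :
    ‖((1 / 2 ^ (2 * k + 1)) * ∑ x : Fin (2 * k + 1) → Bool,
        (∏ i, (if x i then (1 : ℂ) else -1)) *
          Complex.exp (2 * (Real.pi : ℂ) * Complex.I *
            (((((m + 1) / 4 : ℕ) : ℤ) *
                ((∑ i : Fin k,
                    ε i * (if x ⟨2 * i.val, by omega⟩ then (1 : ℤ) else -1) *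
                      (if x ⟨2 * i.val + 1, by omega⟩ then (1 : ℤ) else -1)) +
                  ε₀ * (if x ⟨2 * k, by omega⟩ then (1 : ℤ) else -1)) : ℤ) : ℂ) / (m : ℂ)))‖
      = (2 * Real.cos (Real.pi / (2 * m)) / 2) ^ (k + 1) := by
  set c := (m + 1) / 4
  set φ : ℝ := 2 * π * c / m with hφ
  have hphase (T : ℤ) : 2 * (π : ℂ) * I * (((c : ℤ) * T : ℤ) : ℂ) / m = φ * I * T := by
    rw [hφ]; push_cast; ring
  have hblock (e : ℤ) (he : e = 1 ∨ e = -1) :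
      ‖cexp (φ * I * e) - cexp (-(φ * I * e))‖ = 2 * Real.cos (π / (2 * m)) := by
    rw [norm_cexp_sub_cexp_neg φ he, abs_sin_two_pi_mul_div (by exact_mod_cast hodd.pos)
      (by exact_mod_cast Nat.four_mul_add_one_div_four_of_odd hodd)]
  simp only [hphase, prod_mul_cexp_sum_add]
  rw [sum_prod_pairs_mul_eq k
    (fun (i : Fin k) (q : Bool × Bool) =>
      (if q.1 then (1 : ℂ) else -1) * (if q.2 then (1 : ℂ) else -1) *
        cexp (φ * I * ↑(ε i * (if q.1 then (1 : ℤ) else -1) * (if q.2 then (1 : ℤ) else -1))))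
    (fun (b : Bool) =>
      (if b then (1 : ℂ) else -1) * cexp (φ * I * ↑(ε₀ * if b then (1 : ℤ) else -1)))]
  simp only [sum_bool_sign_mul_sign_mul_cexp, sum_bool_sign_mul_cexp]
  rw [norm_mul, norm_mul, norm_prod]
  simp only [norm_mul, hblock _ (hε _), hblock _ hε₀]
  rw [prod_const, card_univ, Fintype.card_fin, norm_div, norm_one, norm_pow, Complex.norm_two,
    pow_succ, pow_mul]
  field_simp
  ring
end
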